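/- Let P' be symmetric positive definite N×N, H an M×N matrix, R symmetric positive definite M×M, K = P'Hᵀ(HP'Hᵀ+R)⁻¹, P = (I - KH)P', and let x', x ∈ ℝᴺ, z ∈ ℝᴹ satisfy x = x' + K(z - Hx'). Then K z = x - P (P')⁻¹ x'. -/
import Mathlib


open Matrix

theorem ssem_measurement_recovery {N M : ℕ}
    (P' : Matrix (Fin N) (Fin N) ℝ) (H : Matrix (Fin M) (Fin N) ℝ)
    (R : Matrix (Fin M) (Fin M) ℝ)
    (hP' : P'.PosDef) (hR : R.PosDef)
    (K : Matrix (Fin N) (Fin M) ℝ) (hK : K = P' * Hᵀ * (H * P' * Hᵀ + R)⁻¹)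
    (P : Matrix (Fin N) (Fin N) ℝ) (hP : P = (1 - K * H) * P')
    (x' x : Fin N → ℝ) (z : Fin M → ℝ)
    (hx : x = x' + K.mulVec (z - H.mulVec x')) :
    K.mulVec z = x - (P * P'⁻¹).mulVec x' := by
  have hinv : P * P'⁻¹ = 1 - K * H := by
    rw [hP, mul_assoc, Matrix.mul_nonsing_inv P' (isUnit_iff_ne_zero.mpr hP'.det_pos.ne'), mul_one]
  rw [hinv, hx]
  simp [Matrix.mulVec_sub, Matrix.sub_mulVec, Matrix.mulVec_mulVec, Matrix.mulVec_add]
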